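/- arXiv:1511.09171 — 2 statements merged into one kernel-verified Lean document; each statement's English description precedes it below -/
import Mathlib

section
/- Let q > 1 and suppose u : [0,∞) → ℝ is positive, satisfies u(r) ≥ a r² + b for all r ≥ 0 with a, b > 0, and admits the representation u(r) = (r/2)∫₀^r t² u(t)^{-q} dt - (1/2)∫₀^r t³ u(t)^{-q} dt + (1/(6r))∫₀^r t⁴ u(t)^{-q} dt + (r²/6)∫_r^∞ t u(t)^{-q} dt + γr²/6 + 1 for all r > 0, where γ > 0. Then u(r)/r² → γ/6 as r → ∞. -/
/-!
Put `g(t) = t u(t)^{-q}`. The quadratic lower bound gives `g(t) = O(t^{1-2q})` with `1 - 2q < -1`,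
so `g` is integrable on `(0, ∞)`. Dividing the representation by `r²` gives
`u(r)/r² = ½ ⟨t/r⟩ - ½ ⟨(t/r)²⟩ + ⅙ ⟨(t/r)³⟩ + ⅙ ∫_r^∞ g + γ/6 + 1/r²`, where `⟨φ⟩ = ∫₀^r φ(t) g(t) dt`.
Each weight `(t/r)^k` on `(0, r]` is bounded by `1` and tends to `0` pointwise, so by dominated
convergence every term except `γ/6` vanishes as `r → ∞`.
-/

open MeasureTheory Filter Set Topology

theorem integrableOn_Ioi_zero_of_norm_le_rpow {E : Type*} [NormedAddCommGroup E] {f : ℝ → E}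
    {C s : ℝ} (hs : s < -1) (hf : ContinuousOn f (Ici 0))
    (hbound : ∀ t > 1, ‖f t‖ ≤ C * t ^ s) : IntegrableOn f (Ioi 0) := by
  rw [← Ioc_union_Ioi_eq_Ioi zero_le_one]
  refine IntegrableOn.union ?_ ?_
  · exact ((hf.mono Icc_subset_Ici_self).integrableOn_Icc).mono_set Ioc_subset_Icc_self
  · refine ((integrableOn_Ioi_rpow_of_lt hs one_pos).const_mul C).mono' ?_ ?_
    · exact (hf.mono fun t (ht : 1 < t) => zero_le_one.trans ht.le).aestronglyMeasurable
        measurableSet_Ioi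
    · exact (ae_restrict_iff' measurableSet_Ioi).2 (ae_of_all _ hbound)

theorem mul_rpow_neg_le_of_mul_sq_le {a q t v : ℝ} (ha : 0 < a) (hq : 0 ≤ q) (ht : 0 < t)
    (hv : a * t ^ 2 ≤ v) : t * v ^ (-q) ≤ a ^ (-q) * t ^ (1 - 2 * q) := by
  have hat : 0 < a * t ^ 2 := by positivity
  calc t * v ^ (-q) ≤ t * (a * t ^ 2) ^ (-q) :=
        mul_le_mul_of_nonneg_left (Real.rpow_le_rpow_of_nonpos hat hv (neg_nonpos.2 hq)) ht.le
    _ = a ^ (-q) * t ^ (1 - 2 * q) := by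
        rw [Real.mul_rpow ha.le (sq_nonneg t), ← Real.rpow_natCast, ← Real.rpow_mul ht.le,
          show 1 - 2 * q = 1 + (2 : ℕ) * -q by push_cast; ring, Real.rpow_add ht, Real.rpow_one]
        ring

theorem integrableOn_Ioi_mul_rpow_neg_of_sq_le {u : ℝ → ℝ} {a b q : ℝ} (hq : 1 < q)
    (ha : 0 < a) (hb : 0 < b) (hucont : ContinuousOn u (Ici 0))
    (hubound : ∀ r ≥ 0, a * r ^ 2 + b ≤ u r) :
    IntegrableOn (fun t => t * u t ^ (-q)) (Ioi 0) := by
  have hupos : ∀ r ≥ 0, 0 < u r := fun r hr =>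
    (add_pos_of_nonneg_of_pos (by positivity) hb).trans_le (hubound r hr)
  refine integrableOn_Ioi_zero_of_norm_le_rpow (C := a ^ (-q)) (s := 1 - 2 * q) (by linarith)
    (continuousOn_id.mul (hucont.rpow_const fun t ht => Or.inl (hupos t ht).ne')) ?_
  intro t ht
  have ht0 : 0 < t := one_pos.trans ht
  rw [Real.norm_of_nonneg (mul_nonneg ht0.le (Real.rpow_nonneg (hupos t ht0.le).le _))]
  exact mul_rpow_neg_le_of_mul_sq_le ha (by linarith) ht0
    ((le_add_of_nonneg_right hb.le).trans (hubound t ht0.le))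

theorem tendsto_integral_pow_mul_div_pow_atTop {g : ℝ → ℝ} (hg : IntegrableOn g (Ioi 0))
    {k : ℕ} (hk : k ≠ 0) :
    Tendsto (fun r => (∫ t in (0:ℝ)..r, t ^ k * g t) / r ^ k) atTop (𝓝 0) := by
  set F : ℝ → ℝ → ℝ := fun r => (Iic r).indicator fun t => (t / r) ^ k * g t
  have hF : ∀ r > 0, (∫ t in (0:ℝ)..r, t ^ k * g t) / r ^ k = ∫ t in Ioi 0, F r t := by
    intro r hr
    rw [integral_indicator measurableSet_Iic, Measure.restrict_restrict measurableSet_Iic,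
      Iic_inter_Ioi, intervalIntegral.integral_of_le hr.le, ← integral_div]
    congr 1 with t
    rw [div_pow]; ring
  have hlim : Tendsto (fun r => ∫ t in Ioi 0, F r t) atTop (𝓝 (∫ _ in Ioi (0:ℝ), (0:ℝ))) := by
    refine tendsto_integral_filter_of_dominated_convergence (fun t => ‖g t‖) ?_ ?_ hg.norm ?_
    · exact Eventually.of_forall fun r => ((continuous_id.div_const r).pow k
        |>.aestronglyMeasurable.mul hg.aestronglyMeasurable).indicator measurableSet_Iic
    · filter_upwards [eventually_gt_atTop 0] with r hr
      refine (ae_restrict_iff' measurableSet_Ioi).2 (ae_of_all _ fun t ht => ?_)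
      by_cases htr : t ≤ r
      · have hratio : ‖(t / r) ^ k‖ ≤ 1 := by
          have hnonneg : 0 ≤ t / r := div_nonneg (le_of_lt ht) hr.le
          rw [norm_pow, Real.norm_of_nonneg hnonneg]
          exact pow_le_one₀ hnonneg ((div_le_one hr).2 htr)
        simp only [F, indicator_of_mem (show t ∈ Iic r from htr), norm_mul]
        exact mul_le_of_le_one_left (norm_nonneg _) hratio
      · simp [F, indicator_of_notMem (show t ∉ Iic r from htr)]
    · refine ae_of_all _ fun t => ?_
      have hpow : Tendsto (fun r : ℝ => (t / r) ^ k * g t) atTop (𝓝 0) := by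
        simpa [zero_pow hk] using
          ((tendsto_const_nhds.div_atTop tendsto_id).pow k).mul_const (g t)
      refine hpow.congr' ?_
      filter_upwards [eventually_ge_atTop t] with r hr
      simp [F, indicator_of_mem (show t ∈ Iic r from hr)]
  rw [integral_zero] at hlim
  exact hlim.congr' (eventually_gt_atTop 0 |>.mono fun r hr => (hF r hr).symm)

theorem stmt_18_general (q : ℝ) (hq : 1 < q) (u : ℝ → ℝ) (a b γ : ℝ)
    (ha : 0 < a) (hb : 0 < b)
    (hucont : ContinuousOn u (Set.Ici 0))
    (hubound : ∀ r ≥ 0, a * r ^ 2 + b ≤ u r)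
    (hrep : ∀ r > 0, u r =
      (r / 2) * (∫ t in (0:ℝ)..r, t ^ 2 * u t ^ (-q))
      - (1 / 2) * (∫ t in (0:ℝ)..r, t ^ 3 * u t ^ (-q))
      + (1 / (6 * r)) * (∫ t in (0:ℝ)..r, t ^ 4 * u t ^ (-q))
      + (r ^ 2 / 6) * (∫ t in Set.Ioi r, t * u t ^ (-q))
      + γ * r ^ 2 / 6 + 1) :
    Filter.Tendsto (fun r => u r / r ^ 2) Filter.atTop (nhds (γ / 6)) := by
  have hg : IntegrableOn (fun t => t * u t ^ (-q)) (Ioi 0) :=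
    integrableOn_Ioi_mul_rpow_neg_of_sq_le hq ha hb hucont hubound
  have h1 := tendsto_integral_pow_mul_div_pow_atTop hg one_ne_zero
  have h2 := tendsto_integral_pow_mul_div_pow_atTop hg two_ne_zero
  have h3 := tendsto_integral_pow_mul_div_pow_atTop hg three_ne_zero
  simp only [← mul_assoc, ← pow_succ, Nat.reduceAdd, pow_one] at h1 h2 h3
  have hinv : Tendsto (fun r : ℝ => (r ^ 2)⁻¹) atTop (𝓝 0) :=
    tendsto_inv_atTop_zero.comp (tendsto_pow_atTop two_ne_zero)
  have htail : Tendsto (fun r => ∫ t in Ioi r, t * u t ^ (-q)) atTop (𝓝 0) :=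
    tendsto_integral_Ioi_zero tendsto_id
  have hlim := ((((h1.const_mul (1 / 2)).sub (h2.const_mul (1 / 2))).add
    (h3.const_mul (1 / 6))).add (htail.const_mul (1 / 6))).add
    (tendsto_const_nhds (x := γ / 6)) |>.add hinv
  simp only [mul_zero, sub_zero, add_zero, zero_add] at hlim
  refine hlim.congr' ?_
  filter_upwards [eventually_gt_atTop 0] with r hr
  rw [hrep r hr]
  field_simp

theorem stmt_18 (q : ℝ) (hq : 1 < q) (u : ℝ → ℝ) (a b γ : ℝ)
    (ha : 0 < a) (hb : 0 < b) (hγ : 0 < γ)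
    (hupos : ∀ r ≥ 0, 0 < u r)
    (hucont : ContinuousOn u (Set.Ici 0))
    (hubound : ∀ r ≥ 0, a * r ^ 2 + b ≤ u r)
    (hrep : ∀ r > 0, u r =
      (r / 2) * (∫ t in (0:ℝ)..r, t ^ 2 * u t ^ (-q))
      - (1 / 2) * (∫ t in (0:ℝ)..r, t ^ 3 * u t ^ (-q))
      + (1 / (6 * r)) * (∫ t in (0:ℝ)..r, t ^ 4 * u t ^ (-q))
      + (r ^ 2 / 6) * (∫ t in Set.Ioi r, t * u t ^ (-q))
      + γ * r ^ 2 / 6 + 1) :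
    Filter.Tendsto (fun r => u r / r ^ 2) Filter.atTop (nhds (γ / 6)) :=
  stmt_18_general q hq u a b γ ha hb hucont hubound hrep
end

section
/- Let q > 3/2 and suppose u : [0,∞) → ℝ is positive, satisfies u(r) ≥ a r² + b with a, b > 0, and u(r) - κr² = (r/2)∫₀^r t² u(t)^{-q} dt - (1/2)∫₀^r t³ u(t)^{-q} dt + (1/(6r))∫₀^r t⁴ u(t)^{-q} dt + (r²/6)∫_r^∞ t u(t)^{-q} dt + u(0) for all r > 0, where κ > 0. Then (u(r) - κr²)/r → (1/2)∫₀^∞ t² u(t)^{-q} dt as r → ∞. -/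
/-!
With `w = u ^ (-q)`, the bound `u t ≥ a t²` makes `t² w(t) ≲ t^(2 - 2q)` integrable at infinity
because `q > 3/2`. Dividing the representation by `r`, the first term tends to
`(1/2) ∫₀^∞ t² w`, and every other term is dominated by `t² w(t)` and tends to zero pointwise
(the weights `(t/r)ⁿ` on `t ≤ r` and `r/t` on `t > r` are at most `1`), so it vanishes by
dominated convergence.
-/

open MeasureTheory Set Filter Topology

theorem integrableOn_Ioi_sq_mul_of_norm_le_rpow {w : ℝ → ℝ} {C s : ℝ}
    (hw : ContinuousOn w (Ici 0)) (hs : 3 < s) (hbound : ∀ t ≥ 1, ‖w t‖ ≤ C * t ^ (-s)) :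
    IntegrableOn (fun t => t ^ 2 * w t) (Ioi 0) := by
  have hcont : ContinuousOn (fun t => t ^ 2 * w t) (Ici 0) := (continuousOn_pow 2).mul hw
  have hnear : IntegrableOn (fun t => t ^ 2 * w t) (Ioc 0 1) :=
    (hcont.mono Icc_subset_Ici_self).integrableOn_Icc.mono_set Ioc_subset_Icc_self
  have hfar : IntegrableOn (fun t => t ^ 2 * w t) (Ioi 1) := by
    refine ((integrableOn_Ioi_rpow_of_lt (by linarith : 2 - s < -1) one_pos).const_mul C).mono'
      ((hcont.mono (Ioi_subset_Ici zero_le_one)).aestronglyMeasurable measurableSet_Ioi) ?_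
    filter_upwards [ae_restrict_mem measurableSet_Ioi] with t (ht : 1 < t)
    have ht0 : 0 < t := zero_lt_one.trans ht
    calc ‖t ^ 2 * w t‖ = t ^ 2 * ‖w t‖ := by rw [norm_mul, norm_pow, Real.norm_of_nonneg ht0.le]
      _ ≤ t ^ 2 * (C * t ^ (-s)) := by gcongr; exact hbound t ht.le
      _ = C * t ^ (2 - s) := by
        rw [sub_eq_add_neg, Real.rpow_add ht0, Real.rpow_two]; ring
  simpa [Ioc_union_Ioi_eq_Ioi zero_le_one] using hnear.union hfar

theorem rpow_neg_le_of_mul_sq_le {a t v q : ℝ} (ha : 0 < a) (ht : 0 < t) (hq : 0 ≤ q)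
    (hv : a * t ^ 2 ≤ v) : v ^ (-q) ≤ a ^ (-q) * t ^ (-(2 * q)) := by
  calc v ^ (-q) ≤ (a * t ^ 2) ^ (-q) :=
        Real.rpow_le_rpow_of_nonpos (by positivity) hv (by linarith)
    _ = a ^ (-q) * t ^ (-(2 * q)) := by
      rw [Real.mul_rpow ha.le (by positivity), ← Real.rpow_two, ← Real.rpow_mul ht.le]
      ring_nf

section Tails

variable {w : ℝ → ℝ} (hw : ∀ t > 0, 0 ≤ w t)
  (hmeas : AEStronglyMeasurable w (volume.restrict (Ioi 0)))
  (hint : IntegrableOn (fun t => t ^ 2 * w t) (Ioi 0))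
include hw hmeas hint

theorem tendsto_intervalIntegral_pow_add_two_mul_div_pow {n : ℕ} (hn : n ≠ 0) :
    Tendsto (fun r => (∫ t in (0:ℝ)..r, t ^ (n + 2) * w t) / r ^ n) atTop (𝓝 0) := by
  have hdct : Tendsto (fun r : ℝ => ∫ t in Ioi 0,
      (Ioc 0 r).indicator (fun t => t ^ (n + 2) * w t / r ^ n) t) atTop
      (𝓝 (∫ _ in Ioi (0:ℝ), (0:ℝ))) := by
    refine tendsto_integral_filter_of_dominated_convergence
      (F := fun r => (Ioc 0 r).indicator (fun t => t ^ (n + 2) * w t / r ^ n))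
      (f := fun _ => 0) _ (Eventually.of_forall fun r =>
        AEStronglyMeasurable.indicator (by fun_prop) measurableSet_Ioc) ?_ hint ?_
    · filter_upwards [eventually_gt_atTop 0] with r hr
      filter_upwards [ae_restrict_mem measurableSet_Ioi] with t (ht : 0 < t)
      have hwt := hw t ht
      rw [Real.norm_of_nonneg (indicator_nonneg (fun x hx =>
        div_nonneg (mul_nonneg (pow_nonneg hx.1.le _) (hw x hx.1)) (pow_nonneg hr.le _)) _)]
      refine indicator_apply_le' (fun htr => ?_) fun _ => mul_nonneg (sq_nonneg t) hwt
      have hratio : (t / r) ^ n ≤ 1 := pow_le_one₀ (by positivity) ((div_le_one hr).2 htr.2)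
      calc t ^ (n + 2) * w t / r ^ n = (t / r) ^ n * (t ^ 2 * w t) := by rw [div_pow]; ring
        _ ≤ 1 * (t ^ 2 * w t) := by gcongr
        _ = t ^ 2 * w t := one_mul _
    · filter_upwards [ae_restrict_mem measurableSet_Ioi] with t (ht : 0 < t)
      refine ((tendsto_const_nhds (x := t ^ (n + 2) * w t)).div_atTop
        (tendsto_pow_atTop hn)).congr' ?_
      filter_upwards [eventually_ge_atTop t] with r hr
      rw [indicator_of_mem (show t ∈ Ioc 0 r from ⟨ht, hr⟩)]
  rw [integral_zero] at hdct
  refine hdct.congr' ?_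
  filter_upwards [eventually_ge_atTop 0] with r hr
  rw [setIntegral_indicator measurableSet_Ioc, inter_eq_right.2 Ioc_subset_Ioi_self,
    intervalIntegral.integral_of_le hr, integral_div]

theorem tendsto_mul_integral_Ioi_mul :
    Tendsto (fun r => r * ∫ t in Ioi r, t * w t) atTop (𝓝 0) := by
  have hdct : Tendsto (fun r : ℝ => ∫ t in Ioi 0,
      (Ioi r).indicator (fun t => r * (t * w t)) t) atTop
      (𝓝 (∫ _ in Ioi (0:ℝ), (0:ℝ))) := by
    refine tendsto_integral_filter_of_dominated_convergence
      (F := fun r => (Ioi r).indicator (fun t => r * (t * w t)))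
      (f := fun _ => 0) _ (Eventually.of_forall fun r =>
        AEStronglyMeasurable.indicator (by fun_prop) measurableSet_Ioi) ?_ hint ?_
    · filter_upwards [eventually_gt_atTop 0] with r hr
      filter_upwards [ae_restrict_mem measurableSet_Ioi] with t (ht : 0 < t)
      have hwt := hw t ht
      rw [Real.norm_of_nonneg (indicator_nonneg (s := Ioi r) (fun x (hx : r < x) =>
        mul_nonneg hr.le (mul_nonneg (hr.trans hx).le (hw x (hr.trans hx)))) _)]
      refine indicator_apply_le' (fun (htr : r < t) => ?_) fun _ => mul_nonneg (sq_nonneg t) hwt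
      calc r * (t * w t) = (r * t) * w t := by ring
        _ ≤ t ^ 2 * w t := by gcongr; nlinarith
    · filter_upwards with t
      refine tendsto_const_nhds.congr' ?_
      filter_upwards [eventually_ge_atTop t] with r hr
      rw [indicator_of_notMem (notMem_Ioi.2 hr)]
  rw [integral_zero] at hdct
  refine hdct.congr' ?_
  filter_upwards [eventually_ge_atTop 0] with r hr
  rw [setIntegral_indicator measurableSet_Ioi, inter_eq_right.2 (Ioi_subset_Ioi hr),
    integral_const_mul]

end Tails

theorem stmt_19_general (q : ℝ) (hq : 3 / 2 < q) (u : ℝ → ℝ) (a b κ : ℝ)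
    (ha : 0 < a) (hb : 0 < b)
    (hupos : ∀ r ≥ 0, 0 < u r)
    (hucont : ContinuousOn u (Set.Ici 0))
    (hubound : ∀ r ≥ 0, a * r ^ 2 + b ≤ u r)
    (hrep : ∀ r > 0, u r - κ * r ^ 2 =
      (r / 2) * (∫ t in (0:ℝ)..r, t ^ 2 * u t ^ (-q))
      - (1 / 2) * (∫ t in (0:ℝ)..r, t ^ 3 * u t ^ (-q))
      + (1 / (6 * r)) * (∫ t in (0:ℝ)..r, t ^ 4 * u t ^ (-q))
      + (r ^ 2 / 6) * (∫ t in Set.Ioi r, t * u t ^ (-q))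
      + u 0) :
    Filter.Tendsto (fun r => (u r - κ * r ^ 2) / r)
      Filter.atTop (nhds ((1 / 2) * ∫ t in Set.Ioi (0:ℝ), t ^ 2 * u t ^ (-q))) := by
  have hw_cont : ContinuousOn (fun t => u t ^ (-q)) (Ici 0) :=
    hucont.rpow_const fun t ht => Or.inl (hupos t ht).ne'
  have hw : ∀ t > 0, 0 ≤ u t ^ (-q) := fun t ht => Real.rpow_nonneg (hupos t ht.le).le _
  have hmeas : AEStronglyMeasurable (fun t => u t ^ (-q)) (volume.restrict (Ioi 0)) :=
    (hw_cont.mono Ioi_subset_Ici_self).aestronglyMeasurable measurableSet_Ioi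
  have hint : IntegrableOn (fun t => t ^ 2 * u t ^ (-q)) (Ioi 0) :=
    integrableOn_Ioi_sq_mul_of_norm_le_rpow (s := 2 * q) hw_cont (by linarith) fun t ht => by
      have ht0 : 0 < t := zero_lt_one.trans_le ht
      rw [Real.norm_of_nonneg (hw t ht0)]
      exact rpow_neg_le_of_mul_sq_le ha ht0 (by linarith) (by linarith [hubound t ht0.le])
  have hlead := (intervalIntegral_tendsto_integral_Ioi 0 hint tendsto_id).const_mul (1 / 2)
  have hcubic := tendsto_intervalIntegral_pow_add_two_mul_div_pow hw hmeas hint one_ne_zero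
  have hquartic := tendsto_intervalIntegral_pow_add_two_mul_div_pow hw hmeas hint two_ne_zero
  have htail := tendsto_mul_integral_Ioi_mul hw hmeas hint
  have hconst : Tendsto (fun r => u 0 / r) atTop (𝓝 0) := tendsto_const_nhds.div_atTop tendsto_id
  have hsum := (((hlead.sub (hcubic.const_mul (1 / 2))).add (hquartic.const_mul (1 / 6))).add
      (htail.const_mul (1 / 6))).add hconst
  simp only [mul_zero, sub_zero, add_zero, Nat.reduceAdd, pow_one, id_eq] at hsum
  refine hsum.congr' ?_
  filter_upwards [eventually_gt_atTop 0] with r hr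
  rw [hrep r hr]
  field_simp

theorem stmt_19 (q : ℝ) (hq : 3 / 2 < q) (u : ℝ → ℝ) (a b κ : ℝ)
    (ha : 0 < a) (hb : 0 < b) (hκ : 0 < κ)
    (hupos : ∀ r ≥ 0, 0 < u r)
    (hucont : ContinuousOn u (Set.Ici 0))
    (hubound : ∀ r ≥ 0, a * r ^ 2 + b ≤ u r)
    (hrep : ∀ r > 0, u r - κ * r ^ 2 =
      (r / 2) * (∫ t in (0:ℝ)..r, t ^ 2 * u t ^ (-q))
      - (1 / 2) * (∫ t in (0:ℝ)..r, t ^ 3 * u t ^ (-q))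
      + (1 / (6 * r)) * (∫ t in (0:ℝ)..r, t ^ 4 * u t ^ (-q))
      + (r ^ 2 / 6) * (∫ t in Set.Ioi r, t * u t ^ (-q))
      + u 0) :
    Filter.Tendsto (fun r => (u r - κ * r ^ 2) / r)
      Filter.atTop (nhds ((1 / 2) * ∫ t in Set.Ioi (0:ℝ), t ^ 2 * u t ^ (-q))) :=
  stmt_19_general q hq u a b κ ha hb hupos hucont hubound hrep
end
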